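/- Let $K$ be a multiple of $\ell \geq 1$, $\pmb{w}$ a nonincreasing nonnegative weight vector of length $K$ summing to 1, and $\pmb{a}$ a nonnegative real vector of length $K$. Define the aggregated vectors $\overline{a}_k = \frac{1}{\ell}(a_{(k-1)\ell+1} + \dots + a_{k\ell})$ and $\overline{w}_k = w_{(k-1)\ell+1} + \dots + w_{k\ell}$ for $k \in [K/\ell]$. Then $\mathrm{OWA}_{\overline{\pmb{w}}}(\overline{\pmb{a}}) \leq \mathrm{OWA}_{\pmb{w}}(\pmb{a})$. -/

import Mathlib

/-!
Let `π` sort the aggregated entries. For each cyclic shift `s` of `Fin ℓ`, pairing the `i`-th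
weight of block `k` with the `(i + s)`-th entry of block `π k` is a permutation of `a`, so by the
rearrangement inequality its weighted sum is at most `OWA w a`. Averaging these sums over the `ℓ`
shifts gives exactly the aggregated OWA, since every weight of block `k` then meets every entry of
block `π k` exactly once.
-/

/-- OWA of a vector with nonincreasing weights: weights are applied to the
entries sorted in nonincreasing order. -/
noncomputable def OWA {K : ℕ} (w a : Fin K → ℝ) : ℝ :=
  ∑ k, w k * a (Tuple.sort (fun i => -a i) k)

/-- Block-aggregated weights: the `k`-th aggregated weight is the sum of the
`ℓ` weights in the `k`-th block. -/
noncomputable def aggW (m ℓ : ℕ) (w : Fin (m * ℓ) → ℝ) : Fin m → ℝ :=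
  fun k => ∑ i : Fin ℓ, w (finProdFinEquiv (k, i))

/-- Block-aggregated vector: the `k`-th aggregated entry is the average of the
`ℓ` entries in the `k`-th block. -/
noncomputable def aggA (m ℓ : ℕ) (a : Fin (m * ℓ) → ℝ) : Fin m → ℝ :=
  fun k => (∑ i : Fin ℓ, a (finProdFinEquiv (k, i))) / ℓ

open Finset

lemma sum_mul_comp_perm_le_OWA {n : ℕ} {w : Fin n → ℝ} (hw : Antitone w) (a : Fin n → ℝ)
    (ρ : Equiv.Perm (Fin n)) : ∑ t, w t * a (ρ t) ≤ OWA w a := by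
  set σ := Tuple.sort (fun i => -a i)
  have hsorted : Antitone (a ∘ σ) := fun i j hij =>
    neg_le_neg_iff.mp (Tuple.monotone_sort (fun i => -a i) hij)
  simpa [OWA] using (hw.monovary hsorted).sum_smul_comp_perm_le_sum_smul (σ := σ⁻¹ * ρ)

lemma sum_sum_mul_add_eq_sum_mul_sum {R G : Type*} [NonUnitalNonAssocSemiring R] [AddGroup G]
    [Fintype G] (x y : G → R) : ∑ s, ∑ i, x i * y (i + s) = (∑ i, x i) * ∑ j, y j := by
  rw [Fintype.sum_mul_sum, sum_comm]
  exact sum_congr rfl fun i _ => (Equiv.sum_comp (Equiv.addLeft i) fun j => x i * y j)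

lemma sum_sum_mul_blockPerm_le_OWA {m ℓ : ℕ} {w : Fin (m * ℓ) → ℝ} (hw : Antitone w)
    (a : Fin (m * ℓ) → ℝ) (π : Equiv.Perm (Fin m)) (τ : Equiv.Perm (Fin ℓ)) :
    ∑ k, ∑ i, w (finProdFinEquiv (k, i)) * a (finProdFinEquiv (π k, τ i)) ≤ OWA w a := by
  let ρ := finProdFinEquiv.permCongr (π.prodCongr τ)
  calc ∑ k, ∑ i, w (finProdFinEquiv (k, i)) * a (finProdFinEquiv (π k, τ i))
      = ∑ t, w t * a (ρ t) := by
        rw [← finProdFinEquiv.sum_comp, Fintype.sum_prod_type]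
        simp [ρ]
    _ ≤ OWA w a := sum_mul_comp_perm_le_OWA hw a ρ

theorem owa_aggregation_lower_general (m ℓ : ℕ) (hℓ : 1 ≤ ℓ)
    (a w : Fin (m * ℓ) → ℝ)
    (hw : Antitone w) :
    OWA (aggW m ℓ w) (aggA m ℓ a) ≤ OWA w a := by
  have : NeZero ℓ := ⟨by omega⟩
  have hℓ_pos : (0 : ℝ) < ℓ := by exact_mod_cast hℓ
  set π := Tuple.sort (fun k => -aggA m ℓ a k)
  have hscaled : ℓ * OWA (aggW m ℓ w) (aggA m ℓ a) = ∑ s : Fin ℓ, ∑ k, ∑ i,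
      w (finProdFinEquiv (k, i)) * a (finProdFinEquiv (π k, Equiv.addRight s i)) := by
    rw [OWA, mul_sum, sum_comm]
    refine sum_congr rfl fun k _ => ?_
    rw [aggW, aggA, mul_div_assoc', mul_div_assoc', mul_div_cancel_left₀ _ hℓ_pos.ne',
      ← sum_sum_mul_add_eq_sum_mul_sum]
    rfl
  refine le_of_mul_le_mul_left ?_ hℓ_pos
  calc ℓ * OWA (aggW m ℓ w) (aggA m ℓ a) = _ := hscaled
    _ ≤ ∑ _s : Fin ℓ, OWA w a :=
        sum_le_sum fun s _ => sum_sum_mul_blockPerm_le_OWA hw a π (Equiv.addRight s)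
    _ = ℓ * OWA w a := by simp

/-- Lemma 3(a): the OWA of the aggregated vector with aggregated weights is at
most the OWA of the original vector. -/
theorem owa_aggregation_lower (m ℓ : ℕ) (hℓ : 1 ≤ ℓ)
    (a w : Fin (m * ℓ) → ℝ)
    (ha : ∀ k, 0 ≤ a k) (hw : Antitone w) (hw0 : ∀ k, 0 ≤ w k)
    (hw1 : ∑ k, w k = 1) :
    OWA (aggW m ℓ w) (aggA m ℓ a) ≤ OWA w a :=
  owa_aggregation_lower_general m ℓ hℓ a w hw
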